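/- If i, j ∈ [n-1] with |i - j| ≥ 2, then the polyurethane toggles p_i and p_j commute: p_i(p_j(π)) = p_j(p_i(π)) for all π ∈ S_n. -/

import Mathlib

/-- `l` is a permutation of `{1, …, n}`, written as a word. -/
def IsPermList (n : ℕ) (l : List ℕ) : Prop := l.Perm (List.range' 1 n)

/-- The word obtained from `l` by exchanging the positions of the entries `i` and `i+1`. -/
def swapEntries (i : ℕ) (l : List ℕ) : List ℕ :=
  l.map fun x => if x = i then i + 1 else if x = i + 1 then i else x

/-- Some entry larger than `i+1` appears (strictly) between the entries `i` and `i+1`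
in the word `l`. -/
def ToggleApplies (i : ℕ) (l : List ℕ) : Prop :=
  ∃ a ∈ l, i + 1 < a ∧
    min (l.idxOf i) (l.idxOf (i + 1)) < l.idxOf a ∧
    l.idxOf a < max (l.idxOf i) (l.idxOf (i + 1))

open scoped Classical in
/-- The polyurethane toggle `p i`. -/
noncomputable def toggle (i : ℕ) (l : List ℕ) : List ℕ :=
  if ToggleApplies i l then swapEntries i l else l

/-! Exchanging the values `j` and `j + 1` is an injective relabelling of the entries, so it
preserves positions; when `|i - j| ≥ 2` it fixes `i` and `i + 1` and maps entries larger than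
`i + 1` to entries larger than `i + 1`. Hence it does not change whether `p i` applies, and since
disjoint transpositions commute, the two toggles commute on every word. -/

theorem List.idxOf_map_of_injective {α β : Type*} [DecidableEq α] [DecidableEq β] {f : α → β}
    (hf : Function.Injective f) (l : List α) (a : α) :
    (l.map f).idxOf (f a) = l.idxOf a := by
  induction l with
  | nil => rfl
  | cons b t ih => simp only [List.map_cons, List.idxOf_cons, ih, beq_eq_beq.mpr hf.eq_iff]

lemma swapEntries_eq_map_swap (i : ℕ) (l : List ℕ) :
    swapEntries i l = l.map (Equiv.swap i (i + 1)) := by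
  refine List.map_congr_left fun x _ => ?_
  rw [Equiv.swap_apply_def]

lemma toggleApplies_map_iff (i : ℕ) (σ : Equiv.Perm ℕ) (hσi : σ i = i) (hσi' : σ (i + 1) = i + 1)
    (hσgt : ∀ a, i + 1 < σ a ↔ i + 1 < a) (l : List ℕ) :
    ToggleApplies i (l.map σ) ↔ ToggleApplies i l := by
  have hidx (a : ℕ) : (l.map σ).idxOf (σ a) = l.idxOf a :=
    List.idxOf_map_of_injective σ.injective l a
  have hidx_i : (l.map σ).idxOf i = l.idxOf i := by rw [← hidx, hσi]
  have hidx_i' : (l.map σ).idxOf (i + 1) = l.idxOf (i + 1) := by rw [← hidx, hσi']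
  simp only [ToggleApplies, List.mem_map, hidx_i, hidx_i']
  constructor
  · rintro ⟨_, ⟨b, hb, rfl⟩, hgt, hlo, hhi⟩
    rw [hidx] at hlo hhi
    exact ⟨b, hb, (hσgt b).mp hgt, hlo, hhi⟩
  · rintro ⟨b, hb, hgt, hlo, hhi⟩
    exact ⟨σ b, ⟨b, hb, rfl⟩, (hσgt b).mpr hgt, by rwa [hidx], by rwa [hidx]⟩

lemma toggleApplies_swapEntries_iff {i j : ℕ} (hij : i + 2 ≤ j ∨ j + 2 ≤ i) (l : List ℕ) :
    ToggleApplies i (swapEntries j l) ↔ ToggleApplies i l := by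
  rw [swapEntries_eq_map_swap]
  refine toggleApplies_map_iff i _ ?_ ?_ (fun a => ?_) l
  · exact Equiv.swap_apply_of_ne_of_ne (by omega) (by omega)
  · exact Equiv.swap_apply_of_ne_of_ne (by omega) (by omega)
  · rw [Equiv.swap_apply_def]
    split_ifs <;> omega

lemma swapEntries_comm {i j : ℕ} (hij : i + 2 ≤ j ∨ j + 2 ≤ i) (l : List ℕ) :
    swapEntries i (swapEntries j l) = swapEntries j (swapEntries i l) := by
  have hcomm : Commute (Equiv.swap i (i + 1)) (Equiv.swap j (j + 1)) :=
    (Equiv.Perm.disjoint_swap_swap (by grind)).commute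
  simp only [swapEntries_eq_map_swap, List.map_map, ← Equiv.Perm.coe_mul, hcomm.eq]

theorem toggle_commute (i j : ℕ) (hij : i + 2 ≤ j ∨ j + 2 ≤ i)
    (l : List ℕ) :
    toggle i (toggle j l) = toggle j (toggle i l) := by
  have hi := toggleApplies_swapEntries_iff hij
  have hj := toggleApplies_swapEntries_iff hij.symm
  by_cases hA : ToggleApplies i l <;> by_cases hB : ToggleApplies j l <;>
    simp [toggle, hA, hB, hi, hj, swapEntries_comm hij]
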